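/- arXiv:quant-ph/0105090 — 3 statements merged into one kernel-verified Lean document; each statement's English description precedes it below -/
import Mathlib

section
/- Let ρ₁ = Tr₂(|ψ⟩⟨ψ|) be the partial trace over the second factor of a pure state ψ ∈ ℂ^{N₁} ⊗ ℂ^{N₂}, and suppose ρ₁ is positive definite. Then with X = |det(ρ₁)|^{1/(2N₁)} (√ρ₁)^{-1}, the state ψ' = (X ⊗ I)ψ satisfies Tr(|ψ'⟩⟨ψ'|) = N₁ det(ρ₁)^{1/N₁} ≤ Tr(|ψ⟩⟨ψ|), with equality iff ρ₁ is proportional to the identity. -/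
/-!
In an eigenbasis of `ρ = ψ ψᴴ` the trace is the sum and the determinant the product of the
eigenvalues, so `N det(ρ)^(1/N) ≤ Tr ρ` is AM–GM, with equality exactly when all eigenvalues
coincide, i.e. when `ρ` is a multiple of the identity. The filter `X = r (√ρ)⁻¹` whitens the state:
`(X ψ)(X ψ)ᴴ = r² (√ρ)⁻¹ ρ (√ρ)⁻¹ = r² I`, and `r² = det(ρ)^(1/N)`.
-/

open Matrix ComplexOrder

/-- The partial trace over the second factor of `|ψ⟩⟨ψ|` for
`ψ ∈ ℂ^{N₁} ⊗ ℂ^{N₂}`, viewing `ψ` as an `N₁ × N₂` matrix of coefficients: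
`(Tr₂ |ψ⟩⟨ψ|)_{i i'} = Σ_j ψ_{ij} conj ψ_{i'j}`. -/
noncomputable def ptrace₂ {N₁ N₂ : ℕ} (ψ : Matrix (Fin N₁) (Fin N₂) ℂ) :
    Matrix (Fin N₁) (Fin N₁) ℂ :=
  ψ * ψᴴ

/-- The square root of a positive semidefinite matrix, as Mathlib (Dec 2024) defined
`Matrix.PosSemidef.sqrt` (removed since). -/
noncomputable def Matrix.PosSemidef.sqrt {n : Type*} [Fintype n] [DecidableEq n]
    {A : Matrix n n ℂ} (hA : A.PosSemidef) : Matrix n n ℂ :=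
  (hA.1.eigenvectorUnitary : Matrix n n ℂ) * diagonal ((↑) ∘ Real.sqrt ∘ hA.1.eigenvalues) *
    (star (hA.1.eigenvectorUnitary : Matrix n n ℂ))

namespace Real

variable {ι : Type*} [Fintype ι]

lemma sum_eq_card_mul_sum_one_div_card_mul [Nonempty ι] (z : ι → ℝ) :
    ∑ i, z i = Fintype.card ι * ∑ i, (1 : ℝ) / Fintype.card ι * z i := by
  rw [← Finset.mul_sum, ← mul_assoc, mul_one_div_cancel (by positivity), one_mul]

lemma card_mul_prod_rpow_le_sum (z : ι → ℝ) (hz : ∀ i, 0 ≤ z i) :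
    Fintype.card ι * (∏ i, z i) ^ ((1 : ℝ) / Fintype.card ι) ≤ ∑ i, z i := by
  rcases isEmpty_or_nonempty ι with hι | hι
  · simp
  rw [← finsetProd_rpow _ _ fun i _ ↦ hz i, sum_eq_card_mul_sum_one_div_card_mul]
  gcongr
  exact geom_mean_le_arith_mean_weighted _ _ _ (fun i _ ↦ by positivity) (by simp)
    fun i _ ↦ hz i

lemma card_mul_prod_rpow_eq_sum_iff (z : ι → ℝ) (hz : ∀ i, 0 ≤ z i) :
    Fintype.card ι * (∏ i, z i) ^ ((1 : ℝ) / Fintype.card ι) = ∑ i, z i ↔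
      ∀ i j, z i = z j := by
  rcases isEmpty_or_nonempty ι with hι | hι
  · simp
  rw [← finsetProd_rpow _ _ fun i _ ↦ hz i, sum_eq_card_mul_sum_one_div_card_mul,
    mul_right_inj' (by positivity),
    geom_mean_eq_arith_mean_weighted_iff_of_pos _ _ _ (fun i _ ↦ by positivity) (by simp)
      fun i _ ↦ hz i]
  simp

end Real

namespace Matrix

variable {𝕜 n : Type*} [RCLike 𝕜] [Fintype n] [DecidableEq n] {A : Matrix n n 𝕜}

lemma IsHermitian.re_det_eq_prod_eigenvalues (hA : A.IsHermitian) :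
    RCLike.re A.det = ∏ i, hA.eigenvalues i := by
  rw [hA.det_eq_prod_eigenvalues, ← RCLike.ofReal_prod, RCLike.ofReal_re]

lemma IsHermitian.re_trace_eq_sum_eigenvalues (hA : A.IsHermitian) :
    RCLike.re A.trace = ∑ i, hA.eigenvalues i := by
  rw [hA.trace_eq_sum_eigenvalues, ← RCLike.ofReal_sum, RCLike.ofReal_re]

lemma IsHermitian.exists_eq_smul_one_iff (hA : A.IsHermitian) :
    (∃ c : ℝ, A = (c : 𝕜) • 1) ↔ ∀ i j, hA.eigenvalues i = hA.eigenvalues j := by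
  constructor
  · rintro ⟨c, rfl⟩
    suffices h : ∀ i, hA.eigenvalues i = c from fun i j ↦ (h i).trans (h j).symm
    intro i
    have hv := hA.mulVec_eigenvectorBasis i
    have hne : (hA.eigenvectorBasis i : n → 𝕜) ≠ 0 :=
      (WithLp.ofLp_eq_zero 2).ne.2 (hA.eigenvectorBasis.orthonormal.ne_zero i)
    rw [smul_mulVec, one_mulVec, RCLike.real_smul_eq_coe_smul (K := 𝕜)] at hv
    exact_mod_cast smul_left_injective 𝕜 hne hv.symm
  · intro h
    rcases isEmpty_or_nonempty n with hn | ⟨⟨i₀⟩⟩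
    · exact ⟨0, Subsingleton.elim _ _⟩
    refine ⟨hA.eigenvalues i₀, ?_⟩
    have hdiag : diagonal (RCLike.ofReal ∘ hA.eigenvalues) =
        (hA.eigenvalues i₀ : 𝕜) • (1 : Matrix n n 𝕜) := by
      ext i j
      simp [diagonal_apply, one_apply, h i i₀]
    conv_lhs => rw [hA.spectral_theorem]
    rw [hdiag, map_smul, map_one]

lemma PosSemidef.card_mul_re_det_rpow_le_re_trace (hA : A.PosSemidef) :
    Fintype.card n * RCLike.re A.det ^ ((1 : ℝ) / Fintype.card n) ≤ RCLike.re A.trace := by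
  rw [hA.1.re_det_eq_prod_eigenvalues, hA.1.re_trace_eq_sum_eigenvalues]
  exact Real.card_mul_prod_rpow_le_sum _ hA.eigenvalues_nonneg

lemma PosSemidef.card_mul_re_det_rpow_eq_re_trace_iff (hA : A.PosSemidef) :
    Fintype.card n * RCLike.re A.det ^ ((1 : ℝ) / Fintype.card n) = RCLike.re A.trace ↔
      ∃ c : ℝ, A = (c : 𝕜) • 1 := by
  rw [hA.1.re_det_eq_prod_eigenvalues, hA.1.re_trace_eq_sum_eigenvalues,
    Real.card_mul_prod_rpow_eq_sum_iff _ hA.eigenvalues_nonneg, hA.1.exists_eq_smul_one_iff]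

lemma IsHermitian.smul_inv_mul_mul_conjTranspose_eq {m : Type*} [Fintype m] {S : Matrix n n 𝕜}
    (hS : S.IsHermitian) (hdet : IsUnit S.det) (r : ℝ) {ψ : Matrix n m 𝕜} (hψ : ψ * ψᴴ = S * S) :
    (r • S⁻¹ * ψ) * (r • S⁻¹ * ψ)ᴴ = (r ^ 2 : ℝ) • (1 : Matrix n n 𝕜) := by
  have hinv : S⁻¹ * (S * S) * S⁻¹ = 1 := by
    rw [← mul_assoc, nonsing_inv_mul S hdet, one_mul, mul_nonsing_inv S hdet]
  calc (r • S⁻¹ * ψ) * (r • S⁻¹ * ψ)ᴴ = (r ^ 2 : ℝ) • (S⁻¹ * (ψ * ψᴴ) * S⁻¹) := by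
        rw [conjTranspose_mul, conjTranspose_smul, conjTranspose_nonsing_inv, hS.eq]
        simp only [star_trivial, Matrix.smul_mul, Matrix.mul_smul, smul_smul, Matrix.mul_assoc, sq]
    _ = (r ^ 2 : ℝ) • (1 : Matrix n n 𝕜) := by rw [hψ, hinv]

end Matrix

namespace Matrix.PosSemidef

variable {n : Type*} [Fintype n] [DecidableEq n] {A : Matrix n n ℂ}

lemma sqrt_eq_conjStarAlgAut (hA : A.PosSemidef) :
    sqrt hA = Unitary.conjStarAlgAut ℂ _ hA.1.eigenvectorUnitary
      (diagonal ((↑) ∘ Real.sqrt ∘ hA.1.eigenvalues)) :=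
  rfl

lemma isHermitian_sqrt (hA : A.PosSemidef) : (sqrt hA).IsHermitian := by
  rw [sqrt_eq_conjStarAlgAut]
  exact IsSelfAdjoint.map (isHermitian_diagonal_of_self_adjoint _
    (funext fun i ↦ Complex.conj_ofReal _)) _

lemma sqrt_mul_self (hA : A.PosSemidef) : sqrt hA * sqrt hA = A := by
  conv_rhs => rw [hA.1.spectral_theorem]
  rw [sqrt_eq_conjStarAlgAut, ← map_mul, diagonal_mul_diagonal]
  congr 2
  funext i
  simp only [Function.comp_apply, ← Complex.ofReal_mul,
    Real.mul_self_sqrt (hA.eigenvalues_nonneg i)]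
  rfl

end Matrix.PosSemidef

lemma Matrix.PosDef.isUnit_det_sqrt {n : Type*} [Fintype n] [DecidableEq n] {A : Matrix n n ℂ}
    (hA : A.PosDef) : IsUnit (PosSemidef.sqrt hA.posSemidef).det := by
  have h : (PosSemidef.sqrt hA.posSemidef).det * (PosSemidef.sqrt hA.posSemidef).det = A.det := by
    rw [← det_mul, PosSemidef.sqrt_mul_self]
  exact isUnit_of_mul_isUnit_left (h ▸ hA.det_pos.ne'.isUnit)

theorem filter_decreases_trace_general (N₁ N₂ : ℕ)
    (ψ : Matrix (Fin N₁) (Fin N₂) ℂ) (hρ : (ptrace₂ ψ).PosDef) :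
    -- `ψ' = X * ψ`, and `Tr |ψ'⟩⟨ψ'| = Tr (ψ' ψ'ᴴ)`
    (∀ X : Matrix (Fin N₁) (Fin N₁) ℂ,
      X = ((‖(ptrace₂ ψ).det‖) ^ ((1 : ℝ) / (2 * N₁)) : ℝ) •
            (Matrix.PosSemidef.sqrt hρ.posSemidef)⁻¹ →
      ((X * ψ) * (X * ψ)ᴴ).trace.re = (N₁ : ℝ) * (ptrace₂ ψ).det.re ^ ((1 : ℝ) / N₁)) ∧
    (N₁ : ℝ) * (ptrace₂ ψ).det.re ^ ((1 : ℝ) / N₁) ≤ (ψ * ψᴴ).trace.re ∧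
    ((N₁ : ℝ) * (ptrace₂ ψ).det.re ^ ((1 : ℝ) / N₁) = (ψ * ψᴴ).trace.re ↔
      ∃ c : ℝ, ptrace₂ ψ = (c : ℂ) • (1 : Matrix (Fin N₁) (Fin N₁) ℂ)) := by
  have hpsd := hρ.posSemidef
  have hnorm : ‖(ptrace₂ ψ).det‖ = (ptrace₂ ψ).det.re :=
    (Complex.re_eq_norm.2 hρ.det_pos.le).symm
  refine ⟨?_, ?_, ?_⟩
  · rintro X rfl
    rw [hpsd.isHermitian_sqrt.smul_inv_mul_mul_conjTranspose_eq hρ.isUnit_det_sqrt _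
        hpsd.sqrt_mul_self.symm, trace_smul, trace_one, Fintype.card_fin, hnorm,
      ← Real.rpow_natCast, ← Real.rpow_mul hρ.det_pos.le.1,
      show (1 : ℝ) / (2 * N₁) * (2 : ℕ) = 1 / N₁ by push_cast; ring, Complex.real_smul,
      Complex.re_ofReal_mul, Complex.natCast_re, mul_comm]
  · have h := hpsd.card_mul_re_det_rpow_le_re_trace
    rwa [Fintype.card_fin] at h
  · have h := hpsd.card_mul_re_det_rpow_eq_re_trace_iff
    rwa [Fintype.card_fin] at h

/-- if `ρ₁ = Tr₂ |ψ⟩⟨ψ|` is positive definite and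
`X = |det ρ₁|^(1/(2N₁)) • (√ρ₁)⁻¹`, then `ψ' = (X ⊗ I) ψ` satisfies
`Tr |ψ'⟩⟨ψ'| = N₁ det(ρ₁)^(1/N₁) ≤ Tr |ψ⟩⟨ψ|`, with equality iff `ρ₁ ∝ I`. -/
theorem filter_decreases_trace (N₁ N₂ : ℕ) (hN₁ : 0 < N₁)
    (ψ : Matrix (Fin N₁) (Fin N₂) ℂ) (hρ : (ptrace₂ ψ).PosDef) :
    -- `ψ' = X * ψ`, and `Tr |ψ'⟩⟨ψ'| = Tr (ψ' ψ'ᴴ)`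
    (∀ X : Matrix (Fin N₁) (Fin N₁) ℂ,
      X = ((‖(ptrace₂ ψ).det‖) ^ ((1 : ℝ) / (2 * N₁)) : ℝ) •
            (Matrix.PosSemidef.sqrt hρ.posSemidef)⁻¹ →
      ((X * ψ) * (X * ψ)ᴴ).trace.re = (N₁ : ℝ) * (ptrace₂ ψ).det.re ^ ((1 : ℝ) / N₁)) ∧
    (N₁ : ℝ) * (ptrace₂ ψ).det.re ^ ((1 : ℝ) / N₁) ≤ (ψ * ψᴴ).trace.re ∧
    ((N₁ : ℝ) * (ptrace₂ ψ).det.re ^ ((1 : ℝ) / N₁) = (ψ * ψᴴ).trace.re ↔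
      ∃ c : ℝ, ptrace₂ ψ = (c : ℂ) • (1 : Matrix (Fin N₁) (Fin N₁) ℂ)) :=
  filter_decreases_trace_general N₁ N₂ ψ hρ
end

section
/- The norm of A_t^{⊗3}|W⟩, where A_t = diag(1/t, t) and |W⟩ = |001⟩+|010⟩+|100⟩, equals √3/t, so the infimum over determinant-1 local operations of the norm of the transformed W-state is 0, but this infimum is not attained by any finite operators. -/
open Matrix

/-- Action of `A ⊗ B ⊗ C` on a three-qubit state given by its coefficients. -/
noncomputable def act3 (A B C : Matrix (Fin 2) (Fin 2) ℂ)
    (ψ : Fin 2 × Fin 2 × Fin 2 → ℂ) : Fin 2 × Fin 2 × Fin 2 → ℂ :=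
  fun x => ∑ i, ∑ j, ∑ k, A x.1 i * B x.2.1 j * C x.2.2 k * ψ (i, j, k)

/-- The standard Hermitian norm of a three-qubit coefficient vector. -/
noncomputable def vnorm (ψ : Fin 2 × Fin 2 × Fin 2 → ℂ) : ℝ :=
  Real.sqrt (∑ x, ‖ψ x‖ ^ 2)

/-- The (unnormalized) W-state `|001⟩ + |010⟩ + |100⟩`. -/
noncomputable def Wstate : Fin 2 × Fin 2 × Fin 2 → ℂ :=
  fun x => if x = (0, 0, 1) ∨ x = (0, 1, 0) ∨ x = (1, 0, 0) then 1 else 0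

/-- The local filter `A_t = diag(1/t, t)`. -/
noncomputable def Afilter (t : ℝ) : Matrix (Fin 2) (Fin 2) ℂ :=
  Matrix.diagonal ![(1 : ℂ) / t, (t : ℂ)]

/-!
A diagonal filter `diag(a, b)^{⊗3}` multiplies each basis vector `|ijk⟩` by a product of
`a`'s and `b`'s, which on the three terms of `|W⟩` is always `a²b`; for `A_t` this gives
`A_t^{⊗3}|W⟩ = |W⟩ / t`, whose norms `√3 / t` tend to `0`. The value `0` is not attained since
`A ⊗ B ⊗ C` is a Kronecker product of invertible matrices, hence invertible, and `|W⟩ ≠ 0`.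
-/

open scoped Kronecker

lemma act3_eq_kronecker_mulVec (A B C : Matrix (Fin 2) (Fin 2) ℂ)
    (ψ : Fin 2 × Fin 2 × Fin 2 → ℂ) : act3 A B C ψ = (A ⊗ₖ (B ⊗ₖ C)) *ᵥ ψ := by
  ext x
  simp only [act3, mulVec, dotProduct, Fintype.sum_prod_type, kroneckerMap_apply, mul_assoc]

lemma act3_injective {A B C : Matrix (Fin 2) (Fin 2) ℂ} (hA : A.det ≠ 0) (hB : B.det ≠ 0)
    (hC : C.det ≠ 0) : Function.Injective (act3 A B C) := by
  have hdet : IsUnit (A ⊗ₖ (B ⊗ₖ C)).det := by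
    simp [det_kronecker, hA, hB, hC]
  intro ψ φ h
  simp only [act3_eq_kronecker_mulVec] at h
  exact mulVec_injective_of_isUnit ((isUnit_iff_isUnit_det _).mpr hdet) h

lemma act3_eq_zero_iff {A B C : Matrix (Fin 2) (Fin 2) ℂ} (hA : A.det ≠ 0) (hB : B.det ≠ 0)
    (hC : C.det ≠ 0) {ψ : Fin 2 × Fin 2 × Fin 2 → ℂ} : act3 A B C ψ = 0 ↔ ψ = 0 :=
  (act3_injective hA hB hC).eq_iff' (by rw [act3_eq_kronecker_mulVec, mulVec_zero])

lemma act3_diagonal (a b c : Fin 2 → ℂ) (ψ : Fin 2 × Fin 2 × Fin 2 → ℂ)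
    (x : Fin 2 × Fin 2 × Fin 2) :
    act3 (diagonal a) (diagonal b) (diagonal c) ψ x = a x.1 * b x.2.1 * c x.2.2 * ψ x := by
  simp [act3, diagonal_apply, ite_mul]

lemma act3_diagonal_Wstate (d : Fin 2 → ℂ) :
    act3 (diagonal d) (diagonal d) (diagonal d) Wstate = (d 0 ^ 2 * d 1) • Wstate := by
  ext ⟨i, j, k⟩
  rw [act3_diagonal]
  fin_cases i <;> fin_cases j <;> fin_cases k <;> simp [Wstate, sq] <;> ring

lemma vnorm_eq_norm (ψ : Fin 2 × Fin 2 × Fin 2 → ℂ) :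
    vnorm ψ = ‖(WithLp.toLp 2 ψ : EuclideanSpace ℂ (Fin 2 × Fin 2 × Fin 2))‖ := by
  rw [EuclideanSpace.norm_eq, vnorm]

lemma vnorm_smul (c : ℂ) (ψ : Fin 2 × Fin 2 × Fin 2 → ℂ) : vnorm (c • ψ) = ‖c‖ * vnorm ψ := by
  rw [vnorm_eq_norm, vnorm_eq_norm, WithLp.toLp_smul, norm_smul]

lemma vnorm_eq_zero {ψ : Fin 2 × Fin 2 × Fin 2 → ℂ} : vnorm ψ = 0 ↔ ψ = 0 := by
  rw [vnorm_eq_norm, norm_eq_zero, WithLp.toLp_eq_zero]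

lemma vnorm_Wstate : vnorm Wstate = √3 := by
  norm_num [vnorm, Wstate, Fintype.sum_prod_type, Fin.sum_univ_two]

lemma det_Afilter {t : ℝ} (ht : t ≠ 0) : (Afilter t).det = 1 := by
  have : (t : ℂ) ≠ 0 := by exact_mod_cast ht
  simp [Afilter, det_diagonal, Fin.prod_univ_two, this]

lemma act3_Afilter_Wstate {t : ℝ} (ht : t ≠ 0) :
    act3 (Afilter t) (Afilter t) (Afilter t) Wstate = ((1 / t : ℝ) : ℂ) • Wstate := by
  have : (t : ℂ) ≠ 0 := by exact_mod_cast ht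
  rw [Afilter, act3_diagonal_Wstate]
  congr 1
  simp only [one_div, cons_val_zero, inv_pow, cons_val_one, cons_val_fin_one, Complex.ofReal_inv]
  field_simp

lemma vnorm_act3_Afilter_Wstate {t : ℝ} (ht : 0 < t) :
    vnorm (act3 (Afilter t) (Afilter t) (Afilter t) Wstate) = √3 / t := by
  rw [act3_Afilter_Wstate ht.ne', vnorm_smul, vnorm_Wstate, Complex.norm_real,
    Real.norm_of_nonneg (by positivity)]
  ring

lemma Wstate_ne_zero : Wstate ≠ 0 := fun h => by
  simpa [Wstate] using congr_fun h (0, 0, 1)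

/-- `‖A_t^{⊗3}|W⟩‖ = √3 / t`, the infimum over determinant-1 local
operations of the norm of the transformed W-state is `0`, but this infimum is not
attained by any (finite) operators. -/
theorem W_infimum_not_attained :
    (∀ t : ℝ, 0 < t → vnorm (act3 (Afilter t) (Afilter t) (Afilter t) Wstate)
        = Real.sqrt 3 / t) ∧
    sInf {r : ℝ | ∃ A B C : Matrix (Fin 2) (Fin 2) ℂ,
        A.det = 1 ∧ B.det = 1 ∧ C.det = 1 ∧ r = vnorm (act3 A B C Wstate)} = 0 ∧
    ¬ ∃ A B C : Matrix (Fin 2) (Fin 2) ℂ,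
        A.det = 1 ∧ B.det = 1 ∧ C.det = 1 ∧ vnorm (act3 A B C Wstate) = 0 := by
  have filter_mem {t : ℝ} (ht : 0 < t) : ∃ A B C : Matrix (Fin 2) (Fin 2) ℂ,
      A.det = 1 ∧ B.det = 1 ∧ C.det = 1 ∧ √3 / t = vnorm (act3 A B C Wstate) :=
    ⟨_, _, _, det_Afilter ht.ne', det_Afilter ht.ne', det_Afilter ht.ne',
      (vnorm_act3_Afilter_Wstate ht).symm⟩
  refine ⟨fun t ht => vnorm_act3_Afilter_Wstate ht, ?_, ?_⟩
  · refine csInf_eq_of_forall_ge_of_forall_gt_exists_lt ⟨_, filter_mem one_pos⟩ ?_ ?_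
    · rintro _ ⟨A, B, C, -, -, -, rfl⟩
      exact Real.sqrt_nonneg _
    · intro ε hε
      have hε' : √3 / (2 * √3 / ε) = ε / 2 := by field_simp
      exact ⟨_, filter_mem (t := 2 * √3 / ε) (by positivity), by linarith⟩
  · rintro ⟨A, B, C, hA, hB, hC, h⟩
    rw [vnorm_eq_zero, act3_eq_zero_iff (by simp [hA]) (by simp [hB]) (by simp [hC])] at h
    exact Wstate_ne_zero h
end

section
/- If M is a linearly homogeneous function on unnormalized multipartite states invariant under determinant-1 local operations, then for invertible local operators A_i, M evaluated on the normalized filtered state equals M(ρ) · (Π_i |det(A_i)|^{2/N_i}) / Tr((⊗_i A_i)ρ(⊗_i A_i)†). In particular, among all determinant-1 local filterings, M of the normalized filtered state is maximized exactly by those (⊗_i A_i) minimizing Tr((⊗_i A_i)ρ(⊗_i A_i)†). -/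
/-!
Write each invertible `Aᵢ` as `cᵢ • Bᵢ` with `det Bᵢ = 1`, where `cᵢ` is an `Nᵢ`-th root of
`det Aᵢ`. Then `⊗ Aᵢ = (∏ cᵢ) • ⊗ Bᵢ`, so the filtered state is `|∏ cᵢ|² = ∏ |det Aᵢ|^{2/Nᵢ}`
times the `SL`-filtered one, whose `M`-value is `M ρ`. Normalizing by the trace removes the
scalar, and homogeneity gives the formula. For determinant-1 filterings it reads `M ρ / Tr`, so
when `M ρ > 0`, maximizing `M` is the same as minimizing the trace.
-/

open Matrix
open scoped ComplexOrder

/-- The local operator `⊗ᵢ Aᵢ` on `ℂ^{N₁} ⊗ ⋯ ⊗ ℂ^{N_p}`, given componentwise. -/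
noncomputable def kron {p : ℕ} {N : Fin p → ℕ}
    (A : ∀ i, Matrix (Fin (N i)) (Fin (N i)) ℂ) :
    Matrix (∀ i, Fin (N i)) (∀ i, Fin (N i)) ℂ :=
  Matrix.of fun x y => ∏ i, A i (x i) (y i)

section Kron

variable {p : ℕ} {N : Fin p → ℕ}

lemma kron_mul (A B : ∀ i, Matrix (Fin (N i)) (Fin (N i)) ℂ) :
    kron A * kron B = kron fun i => A i * B i := by
  ext x y
  simp only [kron, mul_apply, of_apply, Finset.prod_univ_sum, Fintype.piFinset_univ,
    Finset.prod_mul_distrib]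

lemma kron_one : kron (fun i => (1 : Matrix (Fin (N i)) (Fin (N i)) ℂ)) = 1 := by
  ext x y
  simp only [kron, of_apply, one_apply, Finset.prod_boole, Finset.mem_univ, true_implies,
    funext_iff]

lemma kron_smul (c : Fin p → ℂ) (A : ∀ i, Matrix (Fin (N i)) (Fin (N i)) ℂ) :
    kron (fun i => c i • A i) = (∏ i, c i) • kron A := by
  ext x y
  simp only [kron, of_apply, Matrix.smul_apply, smul_eq_mul, Finset.prod_mul_distrib]

lemma isUnit_kron {A : ∀ i, Matrix (Fin (N i)) (Fin (N i)) ℂ} (hA : ∀ i, IsUnit (A i).det) :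
    IsUnit (kron A) := by
  have hinv : kron (fun i => (A i)⁻¹) * kron A = 1 := by
    simp only [kron_mul, nonsing_inv_mul _ (hA _), kron_one]
  exact (isUnit_iff_isUnit_det _).mpr (isUnit_det_of_left_inverse hinv)

end Kron

lemma Matrix.exists_eq_smul_det_eq_one {n : ℕ} (A : Matrix (Fin n) (Fin n) ℂ)
    (hA : IsUnit A.det) :
    ∃ c : ℂ, ∃ B : Matrix (Fin n) (Fin n) ℂ,
      A = c • B ∧ B.det = 1 ∧ ‖c‖ ^ 2 = ‖A.det‖ ^ ((2 : ℝ) / n) := by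
  rcases Nat.eq_zero_or_pos n with rfl | hn
  · exact ⟨1, A, (one_smul _ _).symm, det_isEmpty, by simp⟩
  set c := A.det ^ ((n : ℂ)⁻¹)
  have hc : c ^ n = A.det := Complex.cpow_nat_inv_pow _ hn.ne'
  have hc0 : c ≠ 0 := fun h => hA.ne_zero (by rw [← hc, h, zero_pow hn.ne'])
  refine ⟨c, c⁻¹ • A, by rw [smul_smul, mul_inv_cancel₀ hc0, one_smul], ?_, ?_⟩
  · rw [det_smul, Fintype.card_fin, inv_pow, hc, inv_mul_cancel₀ hA.ne_zero]
  · rw [Complex.norm_cpow_inv_nat, ← Real.rpow_natCast, ← Real.rpow_mul (norm_nonneg _)]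
    congr 1
    push_cast
    ring

lemma exists_kron_eq_smul_kron {p : ℕ} {N : Fin p → ℕ}
    (A : ∀ i, Matrix (Fin (N i)) (Fin (N i)) ℂ) (hA : ∀ i, IsUnit (A i).det) :
    ∃ c : ℂ, ∃ B : ∀ i, Matrix (Fin (N i)) (Fin (N i)) ℂ, (∀ i, (B i).det = 1) ∧
      kron A = c • kron B ∧ ‖c‖ ^ 2 = ∏ i, ‖(A i).det‖ ^ ((2 : ℝ) / N i) := by
  choose c B hAB hB hc using fun i => (A i).exists_eq_smul_det_eq_one (hA i)
  refine ⟨∏ i, c i, B, hB, ?_, ?_⟩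
  · rw [← kron_smul, ← funext hAB]
  · rw [norm_prod, ← Finset.prod_pow]
    exact Finset.prod_congr rfl fun i _ => hc i

lemma smul_mul_mul_conjTranspose_smul {n : Type*} [Fintype n] (c : ℂ) (K σ : Matrix n n ℂ) :
    c • K * σ * (c • K)ᴴ = ((‖c‖ ^ 2 : ℝ) : ℂ) • (K * σ * Kᴴ) := by
  rw [conjTranspose_smul, smul_mul, smul_mul, Matrix.mul_smul, smul_smul, Complex.star_def,
    Complex.mul_conj, Complex.normSq_eq_norm_sq]

lemma inv_re_trace_smul_smul {n : Type*} [Fintype n] {r : ℝ} (hr : r ≠ 0)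
    (σ : Matrix n n ℂ) :
    ((((r : ℂ) • σ).trace.re : ℂ))⁻¹ • ((r : ℂ) • σ) = (σ.trace.re : ℂ)⁻¹ • σ := by
  rw [trace_smul, smul_eq_mul, Complex.re_ofReal_mul, smul_smul]
  congr 1
  push_cast
  field_simp

lemma trace_conj_vecMulVec {m n : Type*} [Fintype m] [Fintype n] (K : Matrix m n ℂ)
    (ψ : n → ℂ) :
    (K * vecMulVec ψ (star ψ) * Kᴴ).trace = star (K *ᵥ ψ) ⬝ᵥ (K *ᵥ ψ) := by
  rw [mul_vecMulVec, vecMulVec_mul, ← star_mulVec, trace_vecMulVec, dotProduct_comm]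

lemma re_trace_conj_vecMulVec_pos {n : Type*} [Fintype n] [DecidableEq n] {K : Matrix n n ℂ}
    (hK : IsUnit K) {ψ : n → ℂ} (hψ : ψ ≠ 0) :
    0 < (K * vecMulVec ψ (star ψ) * Kᴴ).trace.re := by
  have hKψ : K *ᵥ ψ ≠ 0 := fun h =>
    hψ (mulVec_injective_iff_isUnit.mpr hK (h.trans (mulVec_zero K).symm))
  rw [trace_conj_vecMulVec]
  exact (Complex.pos_iff.mp (dotProduct_star_self_pos_iff.mpr hKψ)).1

section Filtering

variable {p : ℕ} {N : Fin p → ℕ} (M : Matrix (∀ i, Fin (N i)) (∀ i, Fin (N i)) ℂ → ℝ)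

lemma apply_normalize_kron_conj
    (hhom : ∀ (c : ℝ), 0 ≤ c → ∀ σ, M ((c : ℂ) • σ) = c * M σ)
    (hinv : ∀ B : ∀ i, Matrix (Fin (N i)) (Fin (N i)) ℂ,
      (∀ i, (B i).det = 1) → ∀ σ, M (kron B * σ * (kron B)ᴴ) = M σ)
    {ρ : Matrix (∀ i, Fin (N i)) (∀ i, Fin (N i)) ℂ} (hρ : ρ.PosSemidef)
    (A : ∀ i, Matrix (Fin (N i)) (Fin (N i)) ℂ) (hA : ∀ i, IsUnit (A i).det) :
    M ((((kron A * ρ * (kron A)ᴴ).trace.re : ℝ) : ℂ)⁻¹ • (kron A * ρ * (kron A)ᴴ))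
      = M ρ * (∏ i, ‖(A i).det‖ ^ ((2 : ℝ) / (N i)))
          / (kron A * ρ * (kron A)ᴴ).trace.re := by
  obtain ⟨c, B, hB, hAB, hc⟩ := exists_kron_eq_smul_kron A hA
  have hc0 : ‖c‖ ^ 2 ≠ 0 := by
    rw [hc]
    exact Finset.prod_ne_zero_iff.mpr fun i _ =>
      (Real.rpow_pos_of_pos (norm_pos_iff.mpr (hA i).ne_zero) _).ne'
  set Y := kron B * ρ * (kron B)ᴴ
  have hY : 0 ≤ Y.trace.re :=
    (Complex.nonneg_iff.mp (hρ.mul_mul_conjTranspose_same _).trace_nonneg).1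
  have hX : kron A * ρ * (kron A)ᴴ = ((‖c‖ ^ 2 : ℝ) : ℂ) • Y := by
    rw [hAB, smul_mul_mul_conjTranspose_smul]
  have hMY : M (((Y.trace.re : ℝ) : ℂ)⁻¹ • Y) = M ρ / Y.trace.re := by
    rw [← Complex.ofReal_inv, hhom _ (inv_nonneg.mpr hY), hinv B hB, inv_mul_eq_div]
  rw [hX, inv_re_trace_smul_smul hc0, hMY, trace_smul, smul_eq_mul, Complex.re_ofReal_mul, ← hc,
    mul_comm (M ρ), mul_div_mul_left _ _ hc0]

end Filtering

theorem optimal_filtering_general (p : ℕ) (N : Fin p → ℕ)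
    (ψ : (∀ i, Fin (N i)) → ℂ) (hψ : ψ ≠ 0)
    (ρ : Matrix (∀ i, Fin (N i)) (∀ i, Fin (N i)) ℂ)
    (hρ : ρ = Matrix.vecMulVec ψ (star ψ))
    (M : Matrix (∀ i, Fin (N i)) (∀ i, Fin (N i)) ℂ → ℝ)
    (hhom : ∀ (c : ℝ), 0 ≤ c → ∀ σ, M ((c : ℂ) • σ) = c * M σ)
    (hinv : ∀ B : ∀ i, Matrix (Fin (N i)) (Fin (N i)) ℂ,
      (∀ i, (B i).det = 1) → ∀ σ, M (kron B * σ * (kron B)ᴴ) = M σ)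
    (hM : 0 < M ρ) :
    (∀ A : ∀ i, Matrix (Fin (N i)) (Fin (N i)) ℂ, (∀ i, IsUnit (A i).det) →
      M ((((kron A * ρ * (kron A)ᴴ).trace.re : ℝ) : ℂ)⁻¹ • (kron A * ρ * (kron A)ᴴ))
        = M ρ * (∏ i, ‖(A i).det‖ ^ ((2 : ℝ) / (N i)))
            / (kron A * ρ * (kron A)ᴴ).trace.re) ∧
    (∀ A : ∀ i, Matrix (Fin (N i)) (Fin (N i)) ℂ, (∀ i, (A i).det = 1) →
      ((∀ B : ∀ i, Matrix (Fin (N i)) (Fin (N i)) ℂ, (∀ i, (B i).det = 1) →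
          M ((((kron B * ρ * (kron B)ᴴ).trace.re : ℝ) : ℂ)⁻¹ • (kron B * ρ * (kron B)ᴴ))
            ≤ M ((((kron A * ρ * (kron A)ᴴ).trace.re : ℝ) : ℂ)⁻¹ • (kron A * ρ * (kron A)ᴴ)))
        ↔ (∀ B : ∀ i, Matrix (Fin (N i)) (Fin (N i)) ℂ, (∀ i, (B i).det = 1) →
          (kron A * ρ * (kron A)ᴴ).trace.re ≤ (kron B * ρ * (kron B)ᴴ).trace.re))) := by
  have hρpsd : ρ.PosSemidef := hρ ▸ posSemidef_vecMulVec_self_star ψ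
  have formula := apply_normalize_kron_conj M hhom hinv hρpsd
  refine ⟨formula, fun A hA => forall₂_congr fun B hB => ?_⟩
  have unimodular : ∀ C : ∀ i, Matrix (Fin (N i)) (Fin (N i)) ℂ, (∀ i, (C i).det = 1) →
      (∀ i, IsUnit (C i).det) ∧ ∏ i, ‖(C i).det‖ ^ ((2 : ℝ) / (N i)) = 1 := fun C hC =>
    ⟨fun i => (hC i).symm ▸ isUnit_one, by simp [hC]⟩
  have trace_pos : ∀ C : ∀ i, Matrix (Fin (N i)) (Fin (N i)) ℂ, (∀ i, (C i).det = 1) →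
      0 < (kron C * ρ * (kron C)ᴴ).trace.re := fun C hC =>
    hρ ▸ re_trace_conj_vecMulVec_pos (isUnit_kron (unimodular C hC).1) hψ
  rw [formula A (unimodular A hA).1, formula B (unimodular B hB).1, (unimodular A hA).2,
    (unimodular B hB).2, mul_one]
  exact div_le_div_iff_of_pos_left hM (trace_pos B hB) (trace_pos A hA)

/-- if `M` is linearly homogeneous and invariant under determinant-1
local operations, then for invertible local operators `Aᵢ`,
`M(filtered/Tr filtered) = M(ρ) ⬝ ∏ᵢ |det Aᵢ|^{2/Nᵢ} / Tr(filtered)`; in particular,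
among determinant-1 local filterings, `M` of the normalized filtered state is
maximized exactly by those minimizing `Tr((⊗Aᵢ)ρ(⊗Aᵢ)†)`. -/
theorem optimal_filtering (p : ℕ) (N : Fin p → ℕ) (hN : ∀ i, 0 < N i)
    (ψ : (∀ i, Fin (N i)) → ℂ) (hψ : ψ ≠ 0)
    (ρ : Matrix (∀ i, Fin (N i)) (∀ i, Fin (N i)) ℂ)
    (hρ : ρ = Matrix.vecMulVec ψ (star ψ))
    (M : Matrix (∀ i, Fin (N i)) (∀ i, Fin (N i)) ℂ → ℝ)
    (hhom : ∀ (c : ℝ), 0 ≤ c → ∀ σ, M ((c : ℂ) • σ) = c * M σ)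
    (hinv : ∀ B : ∀ i, Matrix (Fin (N i)) (Fin (N i)) ℂ,
      (∀ i, (B i).det = 1) → ∀ σ, M (kron B * σ * (kron B)ᴴ) = M σ)
    (hM : 0 < M ρ) :
    (∀ A : ∀ i, Matrix (Fin (N i)) (Fin (N i)) ℂ, (∀ i, IsUnit (A i).det) →
      M ((((kron A * ρ * (kron A)ᴴ).trace.re : ℝ) : ℂ)⁻¹ • (kron A * ρ * (kron A)ᴴ))
        = M ρ * (∏ i, ‖(A i).det‖ ^ ((2 : ℝ) / (N i)))
            / (kron A * ρ * (kron A)ᴴ).trace.re) ∧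
    (∀ A : ∀ i, Matrix (Fin (N i)) (Fin (N i)) ℂ, (∀ i, (A i).det = 1) →
      ((∀ B : ∀ i, Matrix (Fin (N i)) (Fin (N i)) ℂ, (∀ i, (B i).det = 1) →
          M ((((kron B * ρ * (kron B)ᴴ).trace.re : ℝ) : ℂ)⁻¹ • (kron B * ρ * (kron B)ᴴ))
            ≤ M ((((kron A * ρ * (kron A)ᴴ).trace.re : ℝ) : ℂ)⁻¹ • (kron A * ρ * (kron A)ᴴ)))
        ↔ (∀ B : ∀ i, Matrix (Fin (N i)) (Fin (N i)) ℂ, (∀ i, (B i).det = 1) →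
          (kron A * ρ * (kron A)ᴴ).trace.re ≤ (kron B * ρ * (kron B)ᴴ).trace.re))) :=
  optimal_filtering_general p N ψ hψ ρ hρ M hhom hinv hM
end
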